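/- arXiv:2310.05869 — 3 statements merged into one kernel-verified Lean document; each statement's English description precedes it below -/
import Mathlib

section
/- Let P ∈ ℝ^{n×n} be row-stochastic with max_j ‖P e_j‖₂² ≤ α/n, let S ⊆ [n], and let P_S be P with rows outside S zeroed. Then ‖P_S‖_op ≤ 12 · (α·|S|/n)^{1/4}. -/
/-- Spectral (operator) norm of a real matrix. -/
noncomputable def opNorm {m n : ℕ} (M : Matrix (Fin m) (Fin n) ℝ) : ℝ :=
  ‖LinearMap.toContinuousLinearMap (Matrix.toEuclideanLin M)‖

/-- For a row-stochastic matrix whose squared column norms are at most `α/n`,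
the row restriction `P_S` satisfies `‖P_S‖_op ≤ 12 (α |S| / n)^{1/4}`. -/
theorem opNorm_row_restriction_le {n : ℕ} (hn : 0 < n) (α : ℝ) (hα : 0 < α)
    (P : Matrix (Fin n) (Fin n) ℝ)
    (hpos : ∀ i j, 0 ≤ P i j)
    (hrow : ∀ i, ∑ j, P i j = 1)
    (hcol : ∀ j, (∑ i, (P i j) ^ 2) ≤ α / n)
    (S : Finset (Fin n)) :
    opNorm (Matrix.of fun i j => if i ∈ S then P i j else 0) ≤
      12 * (α * S.card / n) ^ ((1 : ℝ) / 4) := by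
  set M : Matrix (Fin n) (Fin n) ℝ := Matrix.of fun i j => if i ∈ S then P i j else 0 with hM
  set t : ℝ := α * S.card / n with ht
  have htnn : 0 ≤ t := by positivity
  -- column sums over S are at most √t
  have hc : ∀ j, (∑ i ∈ S, P i j) ≤ Real.sqrt t := by
    intro j
    have h1 : (∑ i ∈ S, P i j) ^ 2 ≤ (S.card : ℝ) * ∑ i ∈ S, P i j ^ 2 :=
      sq_sum_le_card_mul_sum_sq
    have h2 : (∑ i ∈ S, P i j ^ 2) ≤ ∑ i, P i j ^ 2 :=
      Finset.sum_le_sum_of_subset_of_nonneg (Finset.subset_univ S)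
        (fun i _ _ => sq_nonneg _)
    have h3 : (∑ i ∈ S, P i j) ^ 2 ≤ t := by
      calc (∑ i ∈ S, P i j) ^ 2 ≤ (S.card : ℝ) * ∑ i, P i j ^ 2 := by
            refine h1.trans ?_
            exact mul_le_mul_of_nonneg_left h2 (Nat.cast_nonneg _)
        _ ≤ (S.card : ℝ) * (α / n) :=
            mul_le_mul_of_nonneg_left (hcol j) (Nat.cast_nonneg _)
        _ = t := by rw [ht]; ring
    have h4 := Real.sqrt_le_sqrt h3
    rwa [Real.sqrt_sq (Finset.sum_nonneg fun i _ => hpos i j)] at h4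
  -- key bound on the image norm squared
  have key : ∀ x : EuclideanSpace ℝ (Fin n),
      ‖(Matrix.toEuclideanLin M) x‖ ^ 2 ≤ Real.sqrt t * ‖x‖ ^ 2 := by
    intro x
    have hx : ‖(Matrix.toEuclideanLin M) x‖ ^ 2
        = ∑ i, (M.mulVec (fun j => x j) i) ^ 2 := by
      rw [EuclideanSpace.norm_eq, Real.sq_sqrt (by positivity)]
      simp [Matrix.toEuclideanLin_apply, sq_abs]
    rw [hx]
    have step1 : ∀ i ∈ S, (M.mulVec (fun j => x j) i) ^ 2 ≤ ∑ j, P i j * (x j) ^ 2 := by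
      intro i hi
      have hmv : M.mulVec (fun j => x j) i = ∑ j, P i j * x j := by
        simp [Matrix.mulVec, dotProduct, hM, hi]
      rw [hmv]
      have cs := Finset.sum_mul_sq_le_sq_mul_sq Finset.univ
        (fun j => Real.sqrt (P i j)) (fun j => Real.sqrt (P i j) * x j)
      calc (∑ j, P i j * x j) ^ 2
          = (∑ j, Real.sqrt (P i j) * (Real.sqrt (P i j) * x j)) ^ 2 := by
            congr 1; apply Finset.sum_congr rfl; intro j _
            rw [← mul_assoc, Real.mul_self_sqrt (hpos i j)]
        _ ≤ (∑ j, Real.sqrt (P i j) ^ 2) * (∑ j, (Real.sqrt (P i j) * x j) ^ 2) := cs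
        _ = (∑ j, P i j) * (∑ j, P i j * x j ^ 2) := by
            congr 1 <;> (apply Finset.sum_congr rfl; intro j _)
            · exact Real.sq_sqrt (hpos i j)
            · rw [mul_pow, Real.sq_sqrt (hpos i j)]
        _ = ∑ j, P i j * x j ^ 2 := by rw [hrow i, one_mul]
    calc ∑ i, (M.mulVec (fun j => x j) i) ^ 2
        = ∑ i ∈ S, (M.mulVec (fun j => x j) i) ^ 2 := by
          symm
          apply Finset.sum_subset (Finset.subset_univ S)
          intro i _ hi
          simp [Matrix.mulVec, dotProduct, hM, hi]
      _ ≤ ∑ i ∈ S, ∑ j, P i j * (x j) ^ 2 := Finset.sum_le_sum step1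
      _ = ∑ j, (∑ i ∈ S, P i j) * (x j) ^ 2 := by
          rw [Finset.sum_comm]
          apply Finset.sum_congr rfl; intro j _; rw [Finset.sum_mul]
      _ ≤ ∑ j, Real.sqrt t * (x j) ^ 2 := by
          apply Finset.sum_le_sum; intro j _
          exact mul_le_mul_of_nonneg_right (hc j) (sq_nonneg _)
      _ = Real.sqrt t * ‖x‖ ^ 2 := by
          rw [← Finset.mul_sum, EuclideanSpace.norm_eq, Real.sq_sqrt (by positivity)]
          simp [sq_abs]
  -- conclude
  have hbound : opNorm M ≤ t ^ ((1:ℝ)/4) := by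
    rw [opNorm]
    apply ContinuousLinearMap.opNorm_le_bound _ (by positivity)
    intro x
    have h1 : ‖(Matrix.toEuclideanLin M) x‖ ≤ Real.sqrt (Real.sqrt t * ‖x‖ ^ 2) := by
      have := Real.sqrt_le_sqrt (key x)
      rwa [Real.sqrt_sq (norm_nonneg _)] at this
    refine h1.trans (le_of_eq ?_)
    rw [Real.sqrt_mul (Real.sqrt_nonneg _), Real.sqrt_sq (norm_nonneg _)]
    congr 1
    rw [Real.sqrt_eq_rpow, Real.sqrt_eq_rpow, ← Real.rpow_mul htnn]
    norm_num
  calc opNorm M ≤ t ^ ((1:ℝ)/4) := hbound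
    _ ≤ 12 * t ^ ((1:ℝ)/4) := by nlinarith [Real.rpow_nonneg htnn ((1:ℝ)/4)]
end

section
/- Let M ∈ ℝ^{n×n} and V ∈ ℝ^{n×d}, and let S ∈ ℝ^{m×n} be a random sampling matrix where each row is independently e_{ℓ}ᵀ·‖V‖_F/(√m·‖V_{ℓ,:}‖₂) with ℓ sampled with probability ‖V_{ℓ,:}‖₂²/‖V‖_F². Then E[M Sᵀ S V] = M V and E[‖M Sᵀ S V − M V‖_F²] ≤ (1/m)·‖M‖_F²·‖V‖_F². -/
open scoped Classical
open Matrix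

/-- Squared Frobenius norm. -/
def frobSq {m n : ℕ} (M : Matrix (Fin m) (Fin n) ℝ) : ℝ :=
  ∑ i, ∑ j, (M i j) ^ 2

/-- Squared Euclidean norm of the `ℓ`-th row of `V`. -/
def rowSq {n d : ℕ} (V : Matrix (Fin n) (Fin d) ℝ) (ℓ : Fin n) : ℝ :=
  ∑ j, (V ℓ j) ^ 2

/-- The length-squared sampling matrix determined by a sample `ω` of row
indices: row `r` is `e_{ω r}ᵀ · ‖V‖_F / (√m · ‖V_{ω r,:}‖₂)`. -/
noncomputable def sampMatrix {n d m : ℕ} (V : Matrix (Fin n) (Fin d) ℝ)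
    (ω : Fin m → Fin n) : Matrix (Fin m) (Fin n) ℝ :=
  Matrix.of fun r j =>
    if j = ω r then Real.sqrt (frobSq V) / (Real.sqrt m * Real.sqrt (rowSq V (ω r)))
    else 0

/-! Row `r` of the sampling matrix picks row `ω r` of `V` and column `ω r` of `M`, so each entry
`(M Sᵀ S V) i j` is the sample mean, over `m` independent draws `ℓ ~ p`, of the importance-sampling
estimator `M i ℓ V ℓ j / p ℓ` of `∑ ℓ M i ℓ V ℓ j = (M V) i j`. The expectation of a sample mean is
the single-draw mean, and its variance is `1/m` times the single-draw variance, which is at most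
the second moment `∑ ℓ (M i ℓ V ℓ j)² / p ℓ`. With `p ℓ = ‖V ℓ‖² / ‖V‖_F²`, summing these second
moments over `j` gives `‖V‖_F² ∑ ℓ (M i ℓ)²`, and then over `i` gives `‖M‖_F² ‖V‖_F²`. -/

open Finset

noncomputable def sampleMean {ι : Type*} (κ : Type*) [Fintype κ] (q : ι → ℝ) (ω : κ → ι) : ℝ :=
  (Fintype.card κ : ℝ)⁻¹ * ∑ r, q (ω r)

section ProductWeights

variable {ι κ : Type*} [Fintype ι] [Fintype κ] [DecidableEq κ] {p : ι → ℝ}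

theorem sum_prod_mul_prod_apply (p : ι → ℝ) (g : κ → ι → ℝ) :
    ∑ ω : κ → ι, (∏ r, p (ω r)) * ∏ r, g r (ω r) = ∏ r, ∑ ℓ, p ℓ * g r ℓ := by
  simp_rw [← prod_mul_distrib]
  rw [prod_univ_sum, Fintype.piFinset_univ]

theorem sum_prod_mul_apply (hp : ∑ ℓ, p ℓ = 1) (s : κ) (f : ι → ℝ) :
    ∑ ω : κ → ι, (∏ r, p (ω r)) * f (ω s) = ∑ ℓ, p ℓ * f ℓ := by
  simpa [apply_ite, hp] using sum_prod_mul_prod_apply p fun r ℓ => if r = s then f ℓ else 1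

theorem sum_prod_mul_apply_mul_apply (hp : ∑ ℓ, p ℓ = 1) {s t : κ} (hst : s ≠ t)
    (f g : ι → ℝ) :
    ∑ ω : κ → ι, (∏ r, p (ω r)) * (f (ω s) * g (ω t))
      = (∑ ℓ, p ℓ * f ℓ) * ∑ ℓ, p ℓ * g ℓ := by
  have hprod := sum_prod_mul_prod_apply p fun r ℓ =>
    (if r = s then f ℓ else 1) * (if r = t then g ℓ else 1)
  simp only [prod_mul_distrib, prod_ite_eq', mem_univ, if_true] at hprod
  have hfactor (r : κ) : ∑ ℓ, p ℓ * ((if r = s then f ℓ else 1) * if r = t then g ℓ else 1)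
      = (if r = s then ∑ ℓ, p ℓ * f ℓ else 1) * if r = t then ∑ ℓ, p ℓ * g ℓ else 1 := by
    by_cases hs : r = s <;> by_cases ht : r = t <;> simp_all
  simp_rw [hprod, hfactor, prod_mul_distrib, prod_ite_eq', mem_univ, if_true]

theorem sum_prod_mul_sum_sq_of_centered (hp : ∑ ℓ, p ℓ = 1) {f : ι → ℝ}
    (hf : ∑ ℓ, p ℓ * f ℓ = 0) :
    ∑ ω : κ → ι, (∏ r, p (ω r)) * (∑ r, f (ω r)) ^ 2
      = Fintype.card κ * ∑ ℓ, p ℓ * f ℓ ^ 2 := by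
  -- the coordinates of `ω` are independent, so the cross terms vanish because `f` is centred
  have hpair (s t : κ) : ∑ ω : κ → ι, (∏ r, p (ω r)) * (f (ω s) * f (ω t))
      = if s = t then ∑ ℓ, p ℓ * f ℓ ^ 2 else 0 := by
    split_ifs with hst
    · subst hst
      simp only [← sq]
      exact sum_prod_mul_apply hp s fun ℓ => f ℓ ^ 2
    · rw [sum_prod_mul_apply_mul_apply hp hst, hf, zero_mul]
  simp_rw [sq (∑ r, _), sum_mul_sum, mul_sum]
  rw [sum_comm]
  simp_rw [sum_comm (γ := κ → ι) (t := univ), hpair]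
  simp [mul_sum]

theorem sum_mul_sq_sub_mean (hp : ∑ ℓ, p ℓ = 1) (q : ι → ℝ) :
    ∑ ℓ, p ℓ * (q ℓ - ∑ k, p k * q k) ^ 2 = ∑ ℓ, p ℓ * q ℓ ^ 2 - (∑ ℓ, p ℓ * q ℓ) ^ 2 := by
  set μ := ∑ k, p k * q k
  have hexpand (ℓ : ι) :
      p ℓ * (q ℓ - μ) ^ 2 = p ℓ * q ℓ ^ 2 - 2 * μ * (p ℓ * q ℓ) + μ ^ 2 * p ℓ := by
    ring
  simp_rw [hexpand, sum_add_distrib, sum_sub_distrib, ← mul_sum, hp]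
  ring

variable [Nonempty κ]

theorem sum_prod_mul_sampleMean (hp : ∑ ℓ, p ℓ = 1) (q : ι → ℝ) :
    ∑ ω : κ → ι, (∏ r, p (ω r)) * sampleMean κ q ω = ∑ ℓ, p ℓ * q ℓ := by
  simp_rw [sampleMean, mul_sum]
  rw [sum_comm]
  simp_rw [mul_left_comm _ (Fintype.card κ : ℝ)⁻¹, ← mul_sum, sum_prod_mul_apply hp]
  simp

theorem sum_prod_mul_sampleMean_sub_sq (hp : ∑ ℓ, p ℓ = 1) (q : ι → ℝ) :
    ∑ ω : κ → ι, (∏ r, p (ω r)) * (sampleMean κ q ω - ∑ ℓ, p ℓ * q ℓ) ^ 2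
      = (Fintype.card κ : ℝ)⁻¹ * (∑ ℓ, p ℓ * q ℓ ^ 2 - (∑ ℓ, p ℓ * q ℓ) ^ 2) := by
  rw [← sum_mul_sq_sub_mean hp]
  set μ := ∑ ℓ, p ℓ * q ℓ
  have hcard : (Fintype.card κ : ℝ) ≠ 0 := by positivity
  have hcentered : ∑ ℓ, p ℓ * (q ℓ - μ) = 0 := by
    simp [mul_sub, sum_sub_distrib, ← sum_mul, hp, μ]
  have hshift (ω : κ → ι) :
      sampleMean κ q ω - μ = (Fintype.card κ : ℝ)⁻¹ * ∑ r, (q (ω r) - μ) := by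
    simp only [sampleMean, sum_sub_distrib, sum_const, card_univ, nsmul_eq_mul]
    field_simp
  simp_rw [hshift, mul_pow, mul_left_comm _ ((Fintype.card κ : ℝ)⁻¹ ^ 2), ← mul_sum,
    sum_prod_mul_sum_sq_of_centered hp hcentered]
  field_simp

theorem sum_prod_mul_sampleMean_div (hp : ∑ ℓ, p ℓ = 1) (hp0 : ∀ ℓ, p ℓ ≠ 0) (x : ι → ℝ) :
    ∑ ω : κ → ι, (∏ r, p (ω r)) * sampleMean κ (fun ℓ => x ℓ / p ℓ) ω = ∑ ℓ, x ℓ := by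
  simp [sum_prod_mul_sampleMean hp, mul_div_cancel₀ _ (hp0 _)]

theorem sum_prod_mul_sampleMean_div_sub_sq_le (hp : ∑ ℓ, p ℓ = 1) (hp0 : ∀ ℓ, p ℓ ≠ 0)
    (x : ι → ℝ) :
    ∑ ω : κ → ι, (∏ r, p (ω r)) * (sampleMean κ (fun ℓ => x ℓ / p ℓ) ω - ∑ ℓ, x ℓ) ^ 2
      ≤ (Fintype.card κ : ℝ)⁻¹ * ∑ ℓ, x ℓ ^ 2 / p ℓ := by
  have hmean : ∑ ℓ, x ℓ = ∑ ℓ, p ℓ * (x ℓ / p ℓ) := by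
    simp [mul_div_cancel₀ _ (hp0 _)]
  have hsecond : ∑ ℓ, x ℓ ^ 2 / p ℓ = ∑ ℓ, p ℓ * (x ℓ / p ℓ) ^ 2 := by
    congr! 1 with ℓ
    field_simp [hp0 ℓ]
  rw [hmean, hsecond, sum_prod_mul_sampleMean_sub_sq hp]
  gcongr
  exact sub_le_self _ (sq_nonneg _)

end ProductWeights

noncomputable def lengthSqProb {n d : ℕ} (V : Matrix (Fin n) (Fin d) ℝ) (ℓ : Fin n) : ℝ :=
  rowSq V ℓ / frobSq V

section LengthSquared

variable {n d : ℕ} {V : Matrix (Fin n) (Fin d) ℝ}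

theorem rowSq_nonneg (V : Matrix (Fin n) (Fin d) ℝ) (ℓ : Fin n) : 0 ≤ rowSq V ℓ :=
  sum_nonneg fun _ _ => sq_nonneg _

theorem sum_rowSq (V : Matrix (Fin n) (Fin d) ℝ) : ∑ ℓ, rowSq V ℓ = frobSq V :=
  rfl

theorem frobSq_nonneg (V : Matrix (Fin n) (Fin d) ℝ) : 0 ≤ frobSq V :=
  sum_nonneg fun ℓ _ => rowSq_nonneg V ℓ

theorem frobSq_pos [Nonempty (Fin n)] (hV : ∀ ℓ, rowSq V ℓ ≠ 0) : 0 < frobSq V := by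
  rw [← sum_rowSq]
  exact sum_pos (fun ℓ _ => (rowSq_nonneg V ℓ).lt_of_ne' (hV ℓ)) univ_nonempty

theorem rowSq_div_frobSq (V : Matrix (Fin n) (Fin d) ℝ) (ℓ : Fin n) :
    rowSq V ℓ / frobSq V = lengthSqProb V ℓ :=
  rfl

theorem sum_lengthSqProb [Nonempty (Fin n)] (hV : ∀ ℓ, rowSq V ℓ ≠ 0) :
    ∑ ℓ, lengthSqProb V ℓ = 1 := by
  simp_rw [lengthSqProb, ← sum_div, sum_rowSq]
  exact div_self (frobSq_pos hV).ne'

theorem lengthSqProb_ne_zero [Nonempty (Fin n)] (hV : ∀ ℓ, rowSq V ℓ ≠ 0) (ℓ : Fin n) :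
    lengthSqProb V ℓ ≠ 0 :=
  div_ne_zero (hV ℓ) (frobSq_pos hV).ne'

theorem sum_sum_sum_sq_div_lengthSqProb {k : ℕ} (hV : ∀ ℓ, rowSq V ℓ ≠ 0)
    (M : Matrix (Fin k) (Fin n) ℝ) :
    ∑ i, ∑ j, ∑ ℓ, (M i ℓ * V ℓ j) ^ 2 / lengthSqProb V ℓ = frobSq M * frobSq V := by
  have hrow (i : Fin k) (ℓ : Fin n) :
      ∑ j, (M i ℓ * V ℓ j) ^ 2 / lengthSqProb V ℓ = M i ℓ ^ 2 * frobSq V := by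
    simp_rw [lengthSqProb, mul_pow, ← sum_div, ← mul_sum]
    rw [← rowSq.eq_1]
    field_simp [hV ℓ]
  simp_rw [sum_comm (γ := Fin d), hrow, ← sum_mul]
  rfl

variable {m : ℕ} (ω : Fin m → Fin n)

theorem sampMatrix_mul_apply (r : Fin m) (j : Fin d) :
    (sampMatrix V ω * V) r j
      = √(frobSq V) / (√m * √(rowSq V (ω r))) * V (ω r) j := by
  simp [sampMatrix, mul_apply, ite_mul]

theorem mul_sampMatrix_transpose_apply {k : ℕ} (M : Matrix (Fin k) (Fin n) ℝ) (i : Fin k)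
    (r : Fin m) :
    (M * (sampMatrix V ω)ᵀ) i r
      = M i (ω r) * (√(frobSq V) / (√m * √(rowSq V (ω r)))) := by
  simp [sampMatrix, mul_apply, mul_ite]

theorem mul_sampMatrix_transpose_mul_sampMatrix_mul_apply {k : ℕ}
    (M : Matrix (Fin k) (Fin n) ℝ) (i : Fin k) (j : Fin d) :
    (M * (sampMatrix V ω)ᵀ * sampMatrix V ω * V) i j
      = sampleMean (Fin m) (fun ℓ => M i ℓ * V ℓ j / lengthSqProb V ℓ) ω := by
  have hscale (ℓ : Fin n) : (√(frobSq V) / (√m * √(rowSq V ℓ))) ^ 2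
      = (m : ℝ)⁻¹ / lengthSqProb V ℓ := by
    rw [div_pow, mul_pow, Real.sq_sqrt (frobSq_nonneg V), Real.sq_sqrt m.cast_nonneg,
      Real.sq_sqrt (rowSq_nonneg V ℓ), lengthSqProb, div_div_eq_mul_div]
    ring
  rw [Matrix.mul_assoc, mul_apply, sampleMean, Fintype.card_fin, mul_sum]
  refine sum_congr rfl fun r _ => ?_
  rw [mul_sampMatrix_transpose_apply, sampMatrix_mul_apply]
  linear_combination M i (ω r) * V (ω r) j * hscale (ω r)

end LengthSquared

/-- Length-squared sampling is unbiased and has Frobenius variance at most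
`‖M‖_F²·‖V‖_F²/m`: with each of the `m` rows sampled independently with
probability proportional to the squared row norms of `V`,
`E[M Sᵀ S V] = M V` and `E[‖M Sᵀ S V − M V‖_F²] ≤ ‖M‖_F²‖V‖_F²/m`. -/
theorem lengthSquaredSampling_unbiased_and_variance {n d m : ℕ}
    (hm : 0 < m)
    (M : Matrix (Fin n) (Fin n) ℝ) (V : Matrix (Fin n) (Fin d) ℝ)
    (hV : ∀ ℓ, rowSq V ℓ ≠ 0) :
    (∑ ω : (Fin m → Fin n), (∏ r, rowSq V (ω r) / frobSq V) •
        (M * (sampMatrix V ω)ᵀ * sampMatrix V ω * V) = M * V) ∧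
    (∑ ω : (Fin m → Fin n), (∏ r, rowSq V (ω r) / frobSq V) *
        frobSq (M * (sampMatrix V ω)ᵀ * sampMatrix V ω * V - M * V)
      ≤ (1 / m) * frobSq M * frobSq V) := by
  have : Nonempty (Fin m) := ⟨⟨0, hm⟩⟩
  rcases isEmpty_or_nonempty (Fin n) with hn | hn
  · simp [frobSq, Subsingleton.elim (M * V) 0]
  have hp := sum_lengthSqProb hV
  have hp0 := lengthSqProb_ne_zero hV
  simp only [rowSq_div_frobSq]
  constructor
  · ext i j
    simp only [Matrix.sum_apply, Matrix.smul_apply, smul_eq_mul,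
      mul_sampMatrix_transpose_mul_sampMatrix_mul_apply]
    rw [mul_apply]
    exact sum_prod_mul_sampleMean_div hp hp0 _
  · calc _ = ∑ i, ∑ j, ∑ ω : Fin m → Fin n, (∏ r, lengthSqProb V (ω r)) *
            (sampleMean (Fin m) (fun ℓ => M i ℓ * V ℓ j / lengthSqProb V ℓ) ω
              - ∑ ℓ, M i ℓ * V ℓ j) ^ 2 := by
          simp_rw [frobSq, Matrix.sub_apply, mul_sampMatrix_transpose_mul_sampMatrix_mul_apply,
            mul_apply, mul_sum]
          rw [sum_comm]
          simp_rw [sum_comm (γ := Fin m → Fin n)]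
      _ ≤ ∑ i, ∑ j, (m : ℝ)⁻¹ * ∑ ℓ, (M i ℓ * V ℓ j) ^ 2 / lengthSqProb V ℓ := by
          gcongr with i _ j _
          simpa using sum_prod_mul_sampleMean_div_sub_sq_le (κ := Fin m) hp hp0 _
      _ = 1 / m * frobSq M * frobSq V := by
          simp_rw [← mul_sum, sum_sum_sum_sq_div_lengthSqProb hV]
          ring
end

section
/- Let M ∈ ℝ^{n×n}, V ∈ ℝ^{n×d}, and let S be the length-squared row-sampling matrix for V with m rows (each row picks index ℓ with probability ‖V_{ℓ,:}‖₂²/‖V‖_F² and is scaled by ‖V‖_F/(√m·‖V_{ℓ,:}‖₂)). If m ≥ 100·srank(M)·d/ε², where srank(M) = ‖M‖_F²/‖M‖_op², then with probability at least 0.99, ‖M Sᵀ S V − M V‖_op ≤ ε·‖M‖_op·‖V‖_op. -/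
open scoped Classical
open Matrix

/-! ### Auxiliary lemmas -/

section Aux

lemma aux_euclid_norm_sq {b : ℕ} (x : EuclideanSpace ℝ (Fin b)) : ‖x‖^2 = ∑ j, (x j)^2 := by
  rw [EuclideanSpace.norm_eq, Real.sq_sqrt (by positivity)]
  simp [sq_abs]

lemma aux_toEuclideanLin_apply' {a b : ℕ} (X : Matrix (Fin a) (Fin b) ℝ)
    (x : EuclideanSpace ℝ (Fin b)) (i : Fin a) :
    (Matrix.toEuclideanLin X x) i = ∑ j, X i j * x j := by
  simp [Matrix.toEuclideanLin_apply, Matrix.mulVec, dotProduct]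

lemma aux_frobSq_nonneg {a b : ℕ} (X : Matrix (Fin a) (Fin b) ℝ) : 0 ≤ frobSq X := by
  unfold frobSq; positivity

lemma aux_rowSq_nonneg {n d : ℕ} (V : Matrix (Fin n) (Fin d) ℝ) (ℓ : Fin n) :
    0 ≤ rowSq V ℓ := by
  unfold rowSq; positivity

lemma aux_opNorm_nonneg {a b : ℕ} (X : Matrix (Fin a) (Fin b) ℝ) : 0 ≤ opNorm X :=
  norm_nonneg _

lemma aux_opNorm_le_sqrt_frobSq {a b : ℕ} (X : Matrix (Fin a) (Fin b) ℝ) :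
    opNorm X ≤ Real.sqrt (frobSq X) := by
  apply ContinuousLinearMap.opNorm_le_bound _ (Real.sqrt_nonneg _)
  intro x
  have h0 : 0 ≤ ‖x‖ := norm_nonneg _
  have hL : ‖(LinearMap.toContinuousLinearMap (Matrix.toEuclideanLin X)) x‖^2
      ≤ frobSq X * ‖x‖^2 := by
    rw [LinearMap.coe_toContinuousLinearMap']
    rw [aux_euclid_norm_sq, aux_euclid_norm_sq]
    unfold frobSq
    rw [Finset.sum_mul]
    apply Finset.sum_le_sum
    intro i _
    rw [aux_toEuclideanLin_apply']
    exact Finset.sum_mul_sq_le_sq_mul_sq Finset.univ _ _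
  have := Real.sqrt_le_sqrt hL
  rwa [Real.sqrt_sq (norm_nonneg _), Real.sqrt_mul (aux_frobSq_nonneg X),
    Real.sqrt_sq h0] at this

lemma aux_sq_opNorm_le_frobSq {a b : ℕ} (X : Matrix (Fin a) (Fin b) ℝ) :
    (opNorm X)^2 ≤ frobSq X := by
  have h := aux_opNorm_le_sqrt_frobSq X
  have := pow_le_pow_left₀ (aux_opNorm_nonneg X) h 2
  rwa [Real.sq_sqrt (aux_frobSq_nonneg X)] at this

lemma aux_frobSq_le_card_sq_opNorm {a b : ℕ} (X : Matrix (Fin a) (Fin b) ℝ) :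
    frobSq X ≤ b * (opNorm X)^2 := by
  have key : ∀ j : Fin b, (∑ i, (X i j)^2) ≤ (opNorm X)^2 := by
    intro j
    have h := (LinearMap.toContinuousLinearMap (Matrix.toEuclideanLin X)).le_opNorm
      (EuclideanSpace.single j (1:ℝ))
    rw [EuclideanSpace.norm_single, norm_one, mul_one] at h
    have h2 := pow_le_pow_left₀ (norm_nonneg _) h 2
    rw [LinearMap.coe_toContinuousLinearMap', aux_euclid_norm_sq] at h2
    calc (∑ i, (X i j)^2)
        = ∑ i, ((Matrix.toEuclideanLin X (EuclideanSpace.single j 1)) i)^2 := by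
          apply Finset.sum_congr rfl; intro i _
          rw [aux_toEuclideanLin_apply']
          rw [Finset.sum_eq_single j]
          · simp
          · intro k _ hk; simp [EuclideanSpace.single_apply, hk]
          · simp
      _ ≤ (opNorm X)^2 := h2
  calc frobSq X = ∑ j, ∑ i, (X i j)^2 := by unfold frobSq; exact Finset.sum_comm
    _ ≤ ∑ _j : Fin b, (opNorm X)^2 := Finset.sum_le_sum (fun j _ => key j)
    _ = b * (opNorm X)^2 := by simp [Finset.sum_const, nsmul_eq_mul]

lemma aux_opNorm_pos_of_ne_zero {a b : ℕ} (X : Matrix (Fin a) (Fin b) ℝ) (hX : X ≠ 0) :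
    0 < opNorm X := by
  rcases (aux_opNorm_nonneg X).lt_or_eq with h | h
  · exact h
  · exfalso; apply hX
    have h1 : LinearMap.toContinuousLinearMap (Matrix.toEuclideanLin X) = 0 :=
      norm_eq_zero.mp h.symm
    have h2 : Matrix.toEuclideanLin X = 0 := by
      have := congrArg ContinuousLinearMap.toLinearMap h1
      simpa using this
    exact (LinearEquiv.map_eq_zero_iff _).mp h2

variable {n m : ℕ}

lemma aux_expProd (g : Fin m → Fin n → ℝ) :
    ∑ ω : Fin m → Fin n, ∏ r, g r (ω r) = ∏ r, ∑ ℓ, g r ℓ :=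
  (Fintype.prod_sum g).symm

lemma aux_E0 (p : Fin n → ℝ) (hp1 : ∑ ℓ, p ℓ = 1) :
    ∑ ω : Fin m → Fin n, ∏ r, p (ω r) = 1 := by
  rw [aux_expProd (fun _ ℓ => p ℓ)]
  simp [hp1]

lemma aux_L2 (p : Fin n → ℝ) (hp1 : ∑ ℓ, p ℓ = 1) (q : Fin n → ℝ) (r0 : Fin m) :
    ∑ ω : Fin m → Fin n, (∏ r, p (ω r)) * q (ω r0) = ∑ ℓ, p ℓ * q ℓ := by
  have h1 : ∀ ω : Fin m → Fin n,
      (∏ r, p (ω r)) * q (ω r0) = ∏ r, (p (ω r) * (if r = r0 then q (ω r) else 1)) := by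
    intro ω
    rw [Finset.prod_mul_distrib, Finset.prod_ite_eq' Finset.univ r0 (fun r => q (ω r))]
    simp
  rw [Finset.sum_congr rfl (fun ω _ => h1 ω),
    aux_expProd (fun r ℓ => p ℓ * (if r = r0 then q ℓ else 1))]
  have h2 : ∀ r : Fin m, (∑ ℓ, p ℓ * (if r = r0 then q ℓ else 1))
      = if r = r0 then (∑ ℓ, p ℓ * q ℓ) else 1 := by
    intro r
    by_cases h : r = r0 <;> simp [h, hp1]
  rw [Finset.prod_congr rfl (fun r _ => h2 r),
    Finset.prod_ite_eq' Finset.univ r0 (fun _ => ∑ ℓ, p ℓ * q ℓ)]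
  simp

lemma aux_L3 (p : Fin n → ℝ) (hp1 : ∑ ℓ, p ℓ = 1) (q u : Fin n → ℝ) (r0 s0 : Fin m)
    (hrs : r0 ≠ s0) :
    ∑ ω : Fin m → Fin n, (∏ r, p (ω r)) * (q (ω r0) * u (ω s0)) =
      (∑ ℓ, p ℓ * q ℓ) * (∑ ℓ, p ℓ * u ℓ) := by
  have h1 : ∀ ω : Fin m → Fin n,
      (∏ r, p (ω r)) * (q (ω r0) * u (ω s0)) =
        ∏ r, (p (ω r) * (if r = r0 then q (ω r) else if r = s0 then u (ω r) else 1)) := by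
    intro ω
    rw [Finset.prod_mul_distrib]
    congr 1
    rw [← Finset.mul_prod_erase Finset.univ _ (Finset.mem_univ r0)]
    have hs0 : s0 ∈ Finset.univ.erase r0 := Finset.mem_erase.mpr ⟨hrs.symm, Finset.mem_univ _⟩
    rw [← Finset.mul_prod_erase _ _ hs0]
    rw [Finset.prod_eq_one]
    · simp [hrs.symm]
    · intro r hr
      have h1 := (Finset.mem_erase.mp hr).1
      have h2 := (Finset.mem_erase.mp (Finset.mem_erase.mp hr).2).1
      simp [h1, h2]
  rw [Finset.sum_congr rfl (fun ω _ => h1 ω),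
    aux_expProd (fun r ℓ => p ℓ * (if r = r0 then q ℓ else if r = s0 then u ℓ else 1))]
  have h2 : ∀ r : Fin m, (∑ ℓ, p ℓ * (if r = r0 then q ℓ else if r = s0 then u ℓ else 1))
      = if r = r0 then (∑ ℓ, p ℓ * q ℓ) else if r = s0 then (∑ ℓ, p ℓ * u ℓ) else 1 := by
    intro r
    by_cases h : r = r0
    · simp [h]
    · by_cases h' : r = s0 <;> simp [h, h', hp1]
  rw [Finset.prod_congr rfl (fun r _ => h2 r)]
  rw [← Finset.mul_prod_erase Finset.univ _ (Finset.mem_univ r0)]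
  have hs0 : s0 ∈ Finset.univ.erase r0 := Finset.mem_erase.mpr ⟨hrs.symm, Finset.mem_univ _⟩
  rw [← Finset.mul_prod_erase _ _ hs0]
  rw [Finset.prod_eq_one]
  · simp [hrs.symm]
  · intro r hr
    have h1 := (Finset.mem_erase.mp hr).1
    have h2 := (Finset.mem_erase.mp (Finset.mem_erase.mp hr).2).1
    simp [h1, h2]

lemma aux_E1 (p : Fin n → ℝ) (hp1 : ∑ ℓ, p ℓ = 1) (q : Fin n → ℝ) :
    ∑ ω : Fin m → Fin n, (∏ r, p (ω r)) * (∑ r, q (ω r)) = m * ∑ ℓ, p ℓ * q ℓ := by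
  have : ∀ ω : Fin m → Fin n, (∏ r, p (ω r)) * (∑ r, q (ω r))
      = ∑ r, (∏ r', p (ω r')) * q (ω r) := fun ω => Finset.mul_sum _ _ _
  rw [Finset.sum_congr rfl (fun ω _ => this ω), Finset.sum_comm]
  rw [Finset.sum_congr rfl (fun r _ => aux_L2 p hp1 q r)]
  simp [Finset.sum_const, nsmul_eq_mul]

lemma aux_E2 (p : Fin n → ℝ) (hp1 : ∑ ℓ, p ℓ = 1) (q : Fin n → ℝ) :
    ∑ ω : Fin m → Fin n, (∏ r, p (ω r)) * (∑ r, q (ω r))^2 =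
      m * (∑ ℓ, p ℓ * q ℓ^2) + ((m:ℝ)^2 - m) * (∑ ℓ, p ℓ * q ℓ)^2 := by
  have expand : ∀ ω : Fin m → Fin n, (∏ r, p (ω r)) * (∑ r, q (ω r))^2
      = ∑ r, ∑ s, (∏ r', p (ω r')) * (q (ω r) * q (ω s)) := by
    intro ω
    rw [sq, Finset.sum_mul_sum]
    rw [Finset.mul_sum]
    refine Finset.sum_congr rfl (fun r _ => ?_)
    rw [Finset.mul_sum]
  rw [Finset.sum_congr rfl (fun ω _ => expand ω)]
  rw [Finset.sum_comm]
  have swap2 : ∀ r : Fin m, ∑ ω : Fin m → Fin n, ∑ s, (∏ r', p (ω r')) * (q (ω r) * q (ω s))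
      = ∑ s, ∑ ω : Fin m → Fin n, (∏ r', p (ω r')) * (q (ω r) * q (ω s)) :=
    fun r => Finset.sum_comm
  rw [Finset.sum_congr rfl (fun r _ => swap2 r)]
  have inner : ∀ r s : Fin m, (∑ ω : Fin m → Fin n, (∏ r', p (ω r')) * (q (ω r) * q (ω s)))
      = if r = s then (∑ ℓ, p ℓ * q ℓ^2) else (∑ ℓ, p ℓ * q ℓ)^2 := by
    intro r s
    by_cases h : r = s
    · subst h
      simp only [if_pos rfl]
      have h2 := aux_L2 (m := m) p hp1 (fun ℓ => q ℓ^2) r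
      rw [← h2]
      exact Finset.sum_congr rfl fun ω _ => by ring
    · rw [if_neg h, aux_L3 p hp1 q q r s h, sq]
  rw [Finset.sum_congr rfl (fun r _ => Finset.sum_congr rfl (fun s _ => inner r s))]
  have last : ∀ r : Fin m, (∑ s : Fin m, if r = s then (∑ ℓ, p ℓ * q ℓ^2)
      else (∑ ℓ, p ℓ * q ℓ)^2)
      = (∑ ℓ, p ℓ * q ℓ^2) + ((m:ℝ) - 1) * (∑ ℓ, p ℓ * q ℓ)^2 := by
    intro r
    have step : ∀ s : Fin m, (if r = s then (∑ ℓ, p ℓ * q ℓ^2) else (∑ ℓ, p ℓ * q ℓ)^2)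
        = (∑ ℓ, p ℓ * q ℓ)^2 + (if r = s then (∑ ℓ, p ℓ * q ℓ^2) - (∑ ℓ, p ℓ * q ℓ)^2 else 0) := by
      intro s; by_cases h : r = s <;> simp [h]
    rw [Finset.sum_congr rfl (fun s _ => step s), Finset.sum_add_distrib,
      Finset.sum_ite_eq Finset.univ r (fun _ => (∑ ℓ, p ℓ * q ℓ^2) - (∑ ℓ, p ℓ * q ℓ)^2)]
    simp [Finset.sum_const, nsmul_eq_mul]
    ring
  rw [Finset.sum_congr rfl (fun r _ => last r)]
  simp [Finset.sum_const, nsmul_eq_mul]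
  ring

lemma aux_Evar (p : Fin n → ℝ) (hp1 : ∑ ℓ, p ℓ = 1) (q : Fin n → ℝ) :
    ∑ ω : Fin m → Fin n, (∏ r, p (ω r)) * ((∑ r, q (ω r)) - m * (∑ ℓ, p ℓ * q ℓ))^2 =
      m * ((∑ ℓ, p ℓ * q ℓ^2) - (∑ ℓ, p ℓ * q ℓ)^2) := by
  have expand : ∀ ω : Fin m → Fin n,
      (∏ r, p (ω r)) * ((∑ r, q (ω r)) - m * (∑ ℓ, p ℓ * q ℓ))^2 =
      (∏ r, p (ω r)) * (∑ r, q (ω r))^2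
        - (2 * (m * (∑ ℓ, p ℓ * q ℓ))) * ((∏ r, p (ω r)) * (∑ r, q (ω r)))
        + (m * (∑ ℓ, p ℓ * q ℓ))^2 * (∏ r, p (ω r)) := by
    intro ω; ring
  rw [Finset.sum_congr rfl (fun ω _ => expand ω), Finset.sum_add_distrib,
    Finset.sum_sub_distrib, ← Finset.mul_sum, ← Finset.mul_sum,
    aux_E0 p hp1, aux_E1 p hp1 q, aux_E2 p hp1 q]
  ring

lemma aux_samp_entry {n d m : ℕ} (V : Matrix (Fin n) (Fin d) ℝ)
    (M : Matrix (Fin n) (Fin n) ℝ) (ω : Fin m → Fin n) (i : Fin n) (j : Fin d) :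
    (M * (sampMatrix V ω)ᵀ * sampMatrix V ω * V) i j
      = ∑ r, (frobSq V / (m * rowSq V (ω r))) * (M i (ω r) * V (ω r) j) := by
  have hc : ∀ ℓ : Fin n, (Real.sqrt (frobSq V) / (Real.sqrt m * Real.sqrt (rowSq V ℓ)))
      * (Real.sqrt (frobSq V) / (Real.sqrt m * Real.sqrt (rowSq V ℓ)))
      = frobSq V / (m * rowSq V ℓ) := by
    intro ℓ
    rw [div_mul_div_comm, Real.mul_self_sqrt (by unfold frobSq; positivity)]
    congr 1
    rw [mul_mul_mul_comm, Real.mul_self_sqrt (by positivity),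
      Real.mul_self_sqrt (aux_rowSq_nonneg V ℓ)]
  calc (M * (sampMatrix V ω)ᵀ * sampMatrix V ω * V) i j
      = ∑ l, (∑ r, (∑ k, M i k * (sampMatrix V ω) r k) * (sampMatrix V ω) r l) * V l j := by
        simp [Matrix.mul_apply, Matrix.transpose_apply]
    _ = ∑ r, ∑ l, (∑ k, M i k * (sampMatrix V ω) r k) * (sampMatrix V ω) r l * V l j := by
        rw [Finset.sum_congr rfl (fun l _ => Finset.sum_mul _ _ _)]
        exact Finset.sum_comm
    _ = ∑ r, (frobSq V / (m * rowSq V (ω r))) * (M i (ω r) * V (ω r) j) := by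
        refine Finset.sum_congr rfl (fun r _ => ?_)
        have hk : (∑ k, M i k * (sampMatrix V ω) r k)
            = M i (ω r) * (Real.sqrt (frobSq V) / (Real.sqrt m * Real.sqrt (rowSq V (ω r)))) := by
          simp only [sampMatrix, Matrix.of_apply, mul_ite, mul_zero]
          rw [Finset.sum_ite_eq' Finset.univ (ω r) (fun k => M i k * _)]
          simp
        rw [hk]
        rw [Finset.sum_eq_single (ω r)]
        · have hs : sampMatrix V ω r (ω r)
              = Real.sqrt (frobSq V) / (Real.sqrt m * Real.sqrt (rowSq V (ω r))) := by
            simp [sampMatrix]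
          rw [hs, ← hc (ω r)]
          ring
        · intro l _ hl
          simp [sampMatrix, hl]
        · simp

lemma aux_alg0 (ρ F x : ℝ) (hρ : ρ ≠ 0) (hF : F ≠ 0) :
    ρ / F * (F / ρ * x) = x := by
  field_simp

lemma aux_alg1 (ρ F a b : ℝ) (hρ : ρ ≠ 0) (hF : F ≠ 0) :
    ρ / F * (F / ρ * (a * b))^2 = F / ρ * (a^2 * b^2) := by
  field_simp

lemma aux_alg2 (mm C : ℝ) (hm : mm ≠ 0) : (1/mm)^2 * (mm * C) = 1/mm * C := by
  field_simp

lemma aux_arith (Fv A B W eps mm dd : ℝ) (hmpos : 0 < mm) (heps : 0 < eps)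
    (hB : 0 < B) (hW : 0 < W) (hA : 0 ≤ A) (hVd : Fv ≤ dd * W^2) (hdd : 0 ≤ dd)
    (hmbig : mm ≥ 100 * (A / B^2) * dd / eps^2) :
    Fv * A / mm ≤ (eps * B * W)^2 / 100 := by
  have hkey : 100 * A * dd ≤ mm * (eps^2 * B^2) := by
    have hX : (100 * (A / B^2) * dd / eps^2) * (eps^2 * B^2) = 100 * A * dd := by
      have he2 : eps^2 ≠ 0 := by positivity
      have hB2 : B^2 ≠ 0 := by positivity
      field_simp
    calc 100 * A * dd = (100 * (A / B^2) * dd / eps^2) * (eps^2 * B^2) := hX.symm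
      _ ≤ mm * (eps^2 * B^2) := mul_le_mul_of_nonneg_right hmbig (by positivity)
  rw [div_le_div_iff₀ hmpos (by norm_num)]
  nlinarith [mul_le_mul_of_nonneg_right hkey (sq_nonneg W), sq_nonneg W,
    mul_le_mul_of_nonneg_left hVd (mul_nonneg (by norm_num : (0:ℝ) ≤ 100) hA)]

end Aux

/-- Length-squared sampling with `m ≥ 100·srank(M)·d/ε²` rows gives, with
probability at least `0.99`, a spectral-norm approximate matrix product:
`‖M Sᵀ S V − M V‖_op ≤ ε ‖M‖_op ‖V‖_op`. -/
theorem lengthSquaredSampling_spectral_guarantee {n d m : ℕ} (hm : 0 < m)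
    (M : Matrix (Fin n) (Fin n) ℝ) (V : Matrix (Fin n) (Fin d) ℝ)
    (hV : ∀ ℓ, rowSq V ℓ ≠ 0)
    (ε : ℝ) (hε : 0 < ε) (hMop : 0 < opNorm M)
    (hmbig : (m : ℝ) ≥ 100 * (frobSq M / (opNorm M) ^ 2) * d / ε ^ 2) :
    (0.99 : ℝ) ≤
      ∑ ω ∈ Finset.univ.filter (fun ω : (Fin m → Fin n) =>
          opNorm (M * (sampMatrix V ω)ᵀ * sampMatrix V ω * V - M * V) ≤
            ε * opNorm M * opNorm V),
        ∏ r, rowSq V (ω r) / frobSq V := by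
  -- basic positivity facts
  have hm0 : (m:ℝ) ≠ 0 := Nat.cast_ne_zero.mpr hm.ne'
  have hmpos : (0:ℝ) < m := by exact_mod_cast hm
  have hn : 0 < n := by
    rcases Nat.eq_zero_or_pos n with h | h
    · exfalso; subst h
      have hM0 : M = 0 := by ext i j; exact i.elim0
      rw [hM0] at hMop
      have : opNorm (0 : Matrix (Fin 0) (Fin 0) ℝ) = 0 := by
        unfold opNorm; rw [map_zero]; exact norm_zero
      linarith
    · exact h
  have hrow : ∀ ℓ, 0 < rowSq V ℓ := fun ℓ => (aux_rowSq_nonneg V ℓ).lt_of_ne' (hV ℓ)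
  have hFrow : frobSq V = ∑ ℓ, rowSq V ℓ := rfl
  have hF : 0 < frobSq V := by
    rw [hFrow]
    exact Finset.sum_pos (fun ℓ _ => hrow ℓ) ⟨⟨0, hn⟩, Finset.mem_univ _⟩
  have hVne : V ≠ 0 := by
    intro h
    exact hV ⟨0, hn⟩ (by simp [h, rowSq])
  have hVop : 0 < opNorm V := aux_opNorm_pos_of_ne_zero V hVne
  set p : Fin n → ℝ := fun ℓ => rowSq V ℓ / frobSq V with hpdef
  have hp1 : ∑ ℓ, p ℓ = 1 := by
    rw [hpdef]
    simp only
    rw [← Finset.sum_div, ← hFrow, div_self hF.ne']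
  have hpnn : ∀ ℓ, 0 ≤ p ℓ := fun ℓ => div_nonneg (aux_rowSq_nonneg V ℓ) hF.le
  set q : Fin n → Fin d → Fin n → ℝ :=
    fun i j ℓ => frobSq V / rowSq V ℓ * (M i ℓ * V ℓ j) with hqdef
  have hpq : ∀ i j ℓ, p ℓ * q i j ℓ = M i ℓ * V ℓ j := by
    intro i j ℓ
    show rowSq V ℓ / frobSq V * (frobSq V / rowSq V ℓ * (M i ℓ * V ℓ j)) = M i ℓ * V ℓ j
    exact aux_alg0 _ _ _ (hV ℓ) hF.ne'
  have hmu : ∀ i j, (∑ ℓ, p ℓ * q i j ℓ) = (M * V) i j := by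
    intro i j
    rw [Matrix.mul_apply]
    exact Finset.sum_congr rfl fun ℓ _ => hpq i j ℓ
  -- error matrix entries
  set Err : (Fin m → Fin n) → Matrix (Fin n) (Fin d) ℝ :=
    fun ω => M * (sampMatrix V ω)ᵀ * sampMatrix V ω * V - M * V with hErrDef
  have hErr : ∀ (ω : Fin m → Fin n) i j,
      Err ω i j = (1/m) * ((∑ r, q i j (ω r)) - m * (∑ ℓ, p ℓ * q i j ℓ)) := by
    intro ω i j
    rw [hErrDef]
    simp only [Matrix.sub_apply]
    rw [aux_samp_entry V M ω i j, hmu i j]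
    rw [mul_sub]
    congr 1
    · rw [Finset.mul_sum]
      refine Finset.sum_congr rfl fun r _ => ?_
      show frobSq V / (m * rowSq V (ω r)) * (M i (ω r) * V (ω r) j)
        = 1/(m:ℝ) * (frobSq V / rowSq V (ω r) * (M i (ω r) * V (ω r) j))
      rw [← mul_assoc (1/(m:ℝ)), div_mul_div_comm, one_mul]
    · rw [← mul_assoc, one_div, inv_mul_cancel₀ hm0, one_mul]
  -- expectation bound on the Frobenius error
  have hEntryBound : ∀ i j,
      ∑ ω : Fin m → Fin n, (∏ r, p (ω r)) * (Err ω i j)^2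
        ≤ (1/m) * ∑ ℓ, p ℓ * (q i j ℓ)^2 := by
    intro i j
    have h1 : ∀ ω : Fin m → Fin n, (∏ r, p (ω r)) * (Err ω i j)^2
        = (1/(m:ℝ))^2 * ((∏ r, p (ω r)) *
            ((∑ r, q i j (ω r)) - m * (∑ ℓ, p ℓ * q i j ℓ))^2) := by
      intro ω
      rw [hErr ω i j]
      ring
    rw [Finset.sum_congr rfl (fun ω _ => h1 ω), ← Finset.mul_sum,
      aux_Evar p hp1 (q i j)]
    have hmu2 : (0:ℝ) ≤ (∑ ℓ, p ℓ * q i j ℓ)^2 := sq_nonneg _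
    rw [aux_alg2 _ _ hm0]
    apply mul_le_mul_of_nonneg_left _ (by positivity)
    linarith
  -- sum over all entries
  have hsumq : ∑ i, ∑ j, ∑ ℓ, p ℓ * (q i j ℓ)^2 = frobSq V * frobSq M := by
    have hswap : ∑ i, ∑ j, ∑ ℓ, p ℓ * (q i j ℓ)^2
        = ∑ ℓ, ∑ i, ∑ j, p ℓ * (q i j ℓ)^2 := by
      rw [Finset.sum_congr rfl (fun i (_ : i ∈ Finset.univ) =>
        (Finset.sum_comm : ∑ j, ∑ ℓ, p ℓ * (q i j ℓ)^2 = ∑ ℓ, ∑ j, p ℓ * (q i j ℓ)^2))]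
      exact Finset.sum_comm
    rw [hswap]
    have hinner : ∀ ℓ, ∑ i, ∑ j, p ℓ * (q i j ℓ)^2 = frobSq V * ∑ i, (M i ℓ)^2 := by
      intro ℓ
      have hterm : ∀ i j, p ℓ * (q i j ℓ)^2
          = (frobSq V / rowSq V ℓ) * ((M i ℓ)^2 * (V ℓ j)^2) := by
        intro i j
        show rowSq V ℓ / frobSq V * (frobSq V / rowSq V ℓ * (M i ℓ * V ℓ j))^2
          = frobSq V / rowSq V ℓ * ((M i ℓ)^2 * (V ℓ j)^2)
        exact aux_alg1 _ _ _ _ (hV ℓ) hF.ne'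
      rw [Finset.sum_congr rfl (fun i _ => Finset.sum_congr rfl (fun j _ => hterm i j))]
      have : ∀ i, ∑ j, (frobSq V / rowSq V ℓ) * ((M i ℓ)^2 * (V ℓ j)^2)
          = frobSq V * (M i ℓ)^2 := by
        intro i
        rw [← Finset.mul_sum, ← Finset.mul_sum]
        rw [show (∑ j, (V ℓ j)^2) = rowSq V ℓ from rfl]
        rw [mul_comm ((M i ℓ)^2) (rowSq V ℓ), ← mul_assoc, div_mul_cancel₀ _ (hV ℓ)]
      rw [Finset.sum_congr rfl (fun i _ => this i), ← Finset.mul_sum]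
    rw [Finset.sum_congr rfl (fun ℓ _ => hinner ℓ), ← Finset.mul_sum]
    congr 1
    unfold frobSq
    exact Finset.sum_comm
  have hExpBound : ∑ ω : Fin m → Fin n, (∏ r, p (ω r)) * frobSq (Err ω)
      ≤ frobSq V * frobSq M / m := by
    have h1 : ∀ ω : Fin m → Fin n, (∏ r, p (ω r)) * frobSq (Err ω)
        = ∑ i, ∑ j, (∏ r, p (ω r)) * (Err ω i j)^2 := by
      intro ω
      unfold frobSq
      rw [Finset.mul_sum]
      exact Finset.sum_congr rfl fun i _ => Finset.mul_sum _ _ _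
    rw [Finset.sum_congr rfl (fun ω _ => h1 ω)]
    rw [Finset.sum_comm]
    have h2 : ∀ i, ∑ ω : Fin m → Fin n, ∑ j, (∏ r, p (ω r)) * (Err ω i j)^2
        = ∑ j, ∑ ω : Fin m → Fin n, (∏ r, p (ω r)) * (Err ω i j)^2 :=
      fun i => Finset.sum_comm
    rw [Finset.sum_congr rfl (fun i _ => h2 i)]
    calc ∑ i, ∑ j, ∑ ω : Fin m → Fin n, (∏ r, p (ω r)) * (Err ω i j)^2
        ≤ ∑ i, ∑ j, (1/(m:ℝ)) * ∑ ℓ, p ℓ * (q i j ℓ)^2 := by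
          apply Finset.sum_le_sum; intro i _
          apply Finset.sum_le_sum; intro j _
          exact hEntryBound i j
      _ = (1/(m:ℝ)) * ∑ i, ∑ j, ∑ ℓ, p ℓ * (q i j ℓ)^2 := by
          rw [Finset.mul_sum]
          exact Finset.sum_congr rfl fun i _ => (Finset.mul_sum _ _ _).symm
      _ = frobSq V * frobSq M / m := by rw [hsumq]; ring
  -- arithmetic bound
  set t : ℝ := ε * opNorm M * opNorm V with htdef
  have ht : 0 < t := by positivity
  have hfinal : frobSq V * frobSq M / m ≤ t^2 / 100 := by
    rw [htdef]
    exact aux_arith (frobSq V) (frobSq M) (opNorm M) (opNorm V) ε m d hmpos hε hMop hVop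
      (aux_frobSq_nonneg M) (aux_frobSq_le_card_sq_opNorm V) (Nat.cast_nonneg d) hmbig
  -- Markov
  have hwnn : ∀ ω : Fin m → Fin n, 0 ≤ ∏ r, p (ω r) :=
    fun ω => Finset.prod_nonneg fun r _ => hpnn (ω r)
  set cond : (Fin m → Fin n) → Prop :=
    fun ω => opNorm (Err ω) ≤ t with hconddef
  have htotal : ∑ ω : Fin m → Fin n, ∏ r, p (ω r) = 1 := aux_E0 p hp1
  have hsplit := Finset.sum_filter_add_sum_filter_not Finset.univ cond
    (fun ω => ∏ r, p (ω r))
  have hbad : ∑ ω ∈ Finset.univ.filter (fun ω => ¬ cond ω), ∏ r, p (ω r) ≤ 1/100 := by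
    have hb1 : ∀ ω ∈ Finset.univ.filter (fun ω => ¬ cond ω),
        (∏ r, p (ω r)) * t^2 ≤ (∏ r, p (ω r)) * frobSq (Err ω) := by
      intro ω hω
      have hnc : ¬ cond ω := (Finset.mem_filter.mp hω).2
      have hnc' : t < opNorm (Err ω) := not_le.mp hnc
      have h1 : t^2 ≤ (opNorm (Err ω))^2 :=
        pow_le_pow_left₀ ht.le hnc'.le 2
      have h2 : (opNorm (Err ω))^2 ≤ frobSq (Err ω) := aux_sq_opNorm_le_frobSq _
      exact mul_le_mul_of_nonneg_left (h1.trans h2) (hwnn ω)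
    have hb2 : ∑ ω ∈ Finset.univ.filter (fun ω => ¬ cond ω),
        (∏ r, p (ω r)) * frobSq (Err ω)
        ≤ ∑ ω : Fin m → Fin n, (∏ r, p (ω r)) * frobSq (Err ω) := by
      apply Finset.sum_le_sum_of_subset_of_nonneg (Finset.filter_subset _ _)
      intro ω _ _
      exact mul_nonneg (hwnn ω) (aux_frobSq_nonneg _)
    have hb3 : (∑ ω ∈ Finset.univ.filter (fun ω => ¬ cond ω), ∏ r, p (ω r)) * t^2
        ≤ t^2 / 100 := by
      rw [Finset.sum_mul]
      calc ∑ ω ∈ Finset.univ.filter (fun ω => ¬ cond ω), (∏ r, p (ω r)) * t^2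
          ≤ ∑ ω ∈ Finset.univ.filter (fun ω => ¬ cond ω),
              (∏ r, p (ω r)) * frobSq (Err ω) := Finset.sum_le_sum hb1
        _ ≤ ∑ ω : Fin m → Fin n, (∏ r, p (ω r)) * frobSq (Err ω) := hb2
        _ ≤ frobSq V * frobSq M / m := hExpBound
        _ ≤ t^2 / 100 := hfinal
    have ht2 : 0 < t^2 := by positivity
    have hb4 : (∑ ω ∈ Finset.univ.filter (fun ω => ¬ cond ω), ∏ r, p (ω r)) * t^2
        ≤ (1/100) * t^2 := by linarith
    exact le_of_mul_le_mul_right hb4 ht2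
  have hgood : (0.99:ℝ) ≤ ∑ ω ∈ Finset.univ.filter cond, ∏ r, p (ω r) := by
    have heq : ∑ ω ∈ Finset.univ.filter cond, ∏ r, p (ω r)
        = 1 - ∑ ω ∈ Finset.univ.filter (fun ω => ¬ cond ω), ∏ r, p (ω r) := by
      linarith [hsplit, htotal]
    rw [heq]
    linarith
  exact hgood
end
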